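/- Let X ∈ M_3(ℂ) be Hermitian with eigenvalues (counted with multiplicity) x₁, x₂, x₃. Then Φ(X) is Hermitian and its eigenvalues (counted with multiplicity) are exactly (x₁+x₂)/2, (x₁+x₃)/2, (x₂+x₃)/2. -/
import Mathlib


open Matrix Complex

noncomputable section

/-- Spin-1 matrix `Jₓ = (1/√2)·[[0,1,0],[1,0,1],[0,1,0]]`. -/
def J1x : Matrix (Fin 3) (Fin 3) ℂ :=
  ((Real.sqrt 2 : ℂ))⁻¹ • !![0, 1, 0; 1, 0, 1; 0, 1, 0]

/-- Spin-1 matrix `J_y = (1/√2)·[[0,-i,0],[i,0,-i],[0,i,0]]`. -/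
def J1y : Matrix (Fin 3) (Fin 3) ℂ :=
  ((Real.sqrt 2 : ℂ))⁻¹ • !![0, -Complex.I, 0; Complex.I, 0, -Complex.I; 0, Complex.I, 0]

/-- Spin-1 matrix `J_z = diag(1,0,-1)`. -/
def J1z : Matrix (Fin 3) (Fin 3) ℂ := !![1, 0, 0; 0, 0, 0; 0, 0, -1]

/-- The spin-1 (j = 1) Landau–Streater map `Φ(X) = (JₓXJₓ + J_yXJ_y + J_zXJ_z)/2`. -/
def LS1 (X : Matrix (Fin 3) (Fin 3) ℂ) : Matrix (Fin 3) (Fin 3) ℂ :=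
  (1/2 : ℂ) • (J1x * X * J1x + J1y * X * J1y + J1z * X * J1z)

end

open Polynomial

def Vls : Matrix (Fin 3) (Fin 3) ℂ := !![0, 0, 1; 0, -1, 0; 1, 0, 0]

lemma Vls_mul_Vls : Vls * Vls = 1 := by
  ext i j
  fin_cases i <;> fin_cases j <;>
    simp [Vls, Matrix.mul_apply, Fin.sum_univ_three, Matrix.one_apply,
      Matrix.vecHead, Matrix.vecTail]

lemma Vls_det : Vls.det = 1 := by
  simp [Vls, Matrix.det_fin_three]

lemma LS1_eq (X : Matrix (Fin 3) (Fin 3) ℂ) :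
    LS1 X = (1/2 : ℂ) • ((Matrix.trace X) • (1 : Matrix (Fin 3) (Fin 3) ℂ)
      - Vls * Xᵀ * Vls) := by
  have hc : ((Real.sqrt 2 : ℝ) : ℂ)⁻¹ * ((Real.sqrt 2 : ℝ) : ℂ)⁻¹ = 1/2 := by
    rw [← mul_inv]
    norm_num [← Complex.ofReal_mul, Real.mul_self_sqrt (by norm_num : (0:ℝ) ≤ 2)]
  have hxx : J1x * X * J1x
      = (1/2 : ℂ) • (!![0, 1, 0; 1, 0, 1; 0, 1, 0] * X * !![0, 1, 0; 1, 0, 1; 0, 1, 0]) := by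
    rw [J1x, smul_mul_assoc, smul_mul_assoc, mul_smul_comm, smul_smul, hc]
  have hyy : J1y * X * J1y
      = (1/2 : ℂ) • (!![0, -Complex.I, 0; Complex.I, 0, -Complex.I; 0, Complex.I, 0] * X *
          !![0, -Complex.I, 0; Complex.I, 0, -Complex.I; 0, Complex.I, 0]) := by
    rw [J1y, smul_mul_assoc, smul_mul_assoc, mul_smul_comm, smul_smul, hc]
  rw [LS1, hxx, hyy]
  ext i j
  fin_cases i <;> fin_cases j <;>
    · simp [J1z, Vls, Matrix.mul_apply, Fin.sum_univ_three, -Matrix.cons_mul,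
        Matrix.trace, Matrix.diag, Matrix.one_apply, Matrix.transpose_apply,
        Matrix.vecHead, Matrix.vecTail]
      try ring_nf
      try simp [Complex.I_sq, pow_two]
      try ring_nf

lemma eval_cp (M : Matrix (Fin 3) (Fin 3) ℂ) (z : ℂ) :
    (M.charpoly).eval z = (z • (1 : Matrix (Fin 3) (Fin 3) ℂ) - M).det := by
  rw [Matrix.charpoly, ← Polynomial.coe_evalRingHom, RingHom.map_det]
  congr 1
  ext i j
  by_cases h : i = j <;>
    simp [Matrix.charmatrix_apply, h, Matrix.one_apply, Matrix.diagonal_apply]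

lemma coeff2 (a b c : ℂ) :
    ((X - C a) * (X - C b) * (X - C c)).coeff 2 = -(a + b + c) := by
  have h : (X - C a) * (X - C b) * (X - C c)
      = X^3 - C (a + b + c) * X^2 + C (a*b + a*c + b*c) * X - C (a*b*c) := by
    simp only [Polynomial.C_add, Polynomial.C_mul]; ring
  simp [h, coeff_X_pow, coeff_C, add_mul]

/-- if `X ∈ M₃(ℂ)` is Hermitian with eigenvalues (with multiplicity)
`x₁, x₂, x₃`, then `Φ(X)` is Hermitian with eigenvalues (with multiplicity)
`(x₁+x₂)/2, (x₁+x₃)/2, (x₂+x₃)/2`.  Eigenvalues counted with multiplicity are encoded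
via factorization of the characteristic polynomial. -/
theorem landau_streater_output_spectrum_spin1 (X : Matrix (Fin 3) (Fin 3) ℂ)
    (hX : X.IsHermitian) (x₁ x₂ x₃ : ℝ)
    (hx : X.charpoly =
      (Polynomial.X - Polynomial.C (x₁ : ℂ)) * (Polynomial.X - Polynomial.C (x₂ : ℂ)) *
        (Polynomial.X - Polynomial.C (x₃ : ℂ))) :
    (LS1 X).IsHermitian ∧
      (LS1 X).charpoly =
        (Polynomial.X - Polynomial.C (((x₁ + x₂)/2 : ℝ) : ℂ)) *
          (Polynomial.X - Polynomial.C (((x₁ + x₃)/2 : ℝ) : ℂ)) *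
            (Polynomial.X - Polynomial.C (((x₂ + x₃)/2 : ℝ) : ℂ)) := by
  have ht : Matrix.trace X = ((x₁ : ℂ) + x₂ + x₃) := by
    rw [Matrix.trace_eq_neg_charpoly_coeff, hx]
    simp [coeff2]
  constructor
  · have hV : Vlsᴴ = Vls := by
      ext i j
      fin_cases i <;> fin_cases j <;>
        simp [Vls, Matrix.vecHead, Matrix.vecTail, Matrix.conjTranspose_apply]
    have hXt : Xᵀᴴ = Xᵀ := by
      ext i j
      have := congrFun (congrFun hX j) i
      simpa [Matrix.conjTranspose_apply, Matrix.transpose_apply] using this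
    have hst : star (Matrix.trace X) = Matrix.trace X := by
      rw [ht]; simp [← Complex.ofReal_add]
    rw [LS1_eq]
    unfold Matrix.IsHermitian
    simp only [Matrix.conjTranspose_smul, Matrix.conjTranspose_sub,
      Matrix.conjTranspose_mul, Matrix.conjTranspose_one, hV, hXt, hst,
      ← Matrix.mul_assoc]
    norm_num
  · apply Polynomial.funext
    intro z
    have key : z • (1 : Matrix (Fin 3) (Fin 3) ℂ) - LS1 X
        = (1/2 : ℂ) • (Vls * ((2*z - ((x₁:ℂ)+x₂+x₃)) • 1 + Xᵀ) * Vls) := by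
      rw [LS1_eq, ht]
      have : Vls * ((2*z - ((x₁:ℂ)+x₂+x₃)) • 1 + Xᵀ) * Vls
          = (2*z - ((x₁:ℂ)+x₂+x₃)) • 1 + Vls * Xᵀ * Vls := by
        rw [Matrix.mul_add, Matrix.add_mul, mul_smul_comm, smul_mul_assoc, mul_one,
          Vls_mul_Vls]
      rw [this]
      ext i j
      simp [Matrix.smul_apply, Matrix.sub_apply, Matrix.add_apply, Matrix.one_apply,
        smul_eq_mul]
      by_cases h : i = j <;> simp [h] <;> ring
    rw [eval_cp, key, Matrix.det_smul, Matrix.det_mul, Matrix.det_mul, Vls_det]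
    have h3 : ((2*z - ((x₁:ℂ)+x₂+x₃)) • (1 : Matrix (Fin 3) (Fin 3) ℂ) + Xᵀ).det
        = -((((x₁:ℂ)+x₂+x₃) - 2*z) • (1 : Matrix (Fin 3) (Fin 3) ℂ) - X).det := by
      rw [← Matrix.det_transpose (((2*z - ((x₁:ℂ)+x₂+x₃)) • 1 + Xᵀ)), Matrix.transpose_add,
        Matrix.transpose_smul, Matrix.transpose_one, Matrix.transpose_transpose]
      have : (2*z - ((x₁:ℂ)+x₂+x₃)) • (1 : Matrix (Fin 3) (Fin 3) ℂ) + X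
          = -((((x₁:ℂ)+x₂+x₃) - 2*z) • (1 : Matrix (Fin 3) (Fin 3) ℂ) - X) := by
        ext i j
        simp [Matrix.smul_apply, Matrix.sub_apply, Matrix.add_apply, Matrix.neg_apply,
          Matrix.one_apply, smul_eq_mul]
        by_cases h : i = j <;> simp [h] <;> ring
      rw [this, Matrix.det_neg]
      norm_num
    rw [h3, ← eval_cp, hx]
    simp only [eval_mul, eval_sub, eval_X, eval_C, Fintype.card_fin]
    push_cast
    ring
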